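/- Let I ∈ ℤ_{≥2}, J ∈ ℤ_{≥1}, b ∈ ((I+J-2)/(I+J-1), 1). Define 𝔥_*(z) = 𝔇_*(z)·𝔇_*(𝔭_*(z)) where 𝔇_*(z) = z^{J/I}·((bJ-(J-1))z - ((I+J)b-(I+J-1)))/(z-(Ib-(I-1))) and 𝔭_*(z) = ((I+1)z-1)/(z+I-1). Then for z(θ) = 1/(I+1) + (I/(I+1))e^{iθ}, θ ∈ (-π,π]\{0}, one has |𝔥_*(z(θ))| < 1. -/

import Mathlib

/-!
Put `w = e^{iθ}`, `n = I`, `m = J`, `ε = 1 - b` and `D_k = 1 - kε`. Then `z = (1 + nw)/(n + 1)` and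
`𝔭_*(z) = (n + 1)w/(n + w)`, so `|z| |𝔭_*(z)| = |1 + nw|/|n + w| = 1` and the power factor drops out.
The rational factor becomes `(D_m w - D_{n+m+1})/(w - D_{n+1})` at `z` and
`(D_{m-1} w - D_{n+m})/(D_{-1} w - D_n)` at `𝔭_*(z)`, and `|αw - β|² = α² + β² - 2αβ cos θ`.
The squared modulus of the denominators exceeds that of the numerators by
`2mε(2 - (n+m)ε)(1 - cos θ)·(positive)`, which is positive for `θ ≠ 0`.
-/

open Real

def cosineLaw (c α β : ℝ) : ℝ := α ^ 2 + β ^ 2 - 2 * α * β * c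

theorem norm_ofReal_mul_sub_ofReal_sq {w : ℂ} (hw : ‖w‖ = 1) (α β : ℝ) :
    ‖(α : ℂ) * w - β‖ ^ 2 = cosineLaw w.re α β := by
  have hw' : w.re * w.re + w.im * w.im = 1 := by
    rw [← Complex.normSq_apply, Complex.normSq_eq_norm_sq, hw, one_pow]
  rw [Complex.sq_norm, Complex.normSq_apply, cosineLaw]
  simp only [Complex.sub_re, Complex.mul_re, Complex.ofReal_re, Complex.ofReal_im,
    Complex.sub_im, Complex.mul_im]
  linear_combination α ^ 2 * hw'

theorem norm_one_add_ofReal_mul {w : ℂ} (hw : ‖w‖ = 1) (n : ℝ) :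
    ‖1 + (n : ℂ) * w‖ = ‖(n : ℂ) + w‖ := by
  have : 1 + (n : ℂ) * w = w * (starRingEnd ℂ) ((n : ℂ) + w) := by
    rw [map_add, Complex.conj_ofReal, mul_add, Complex.mul_conj, Complex.normSq_eq_norm_sq, hw]
    push_cast
    ring
  rw [this, norm_mul, hw, one_mul, Complex.norm_conj]

theorem cosineLaw_mul_lt_cosineLaw_mul {n m ε c : ℝ} (hm : 1 ≤ m) (hε : 0 < ε)
    (hnmε : (n + m) * ε < 2) (hc : -1 ≤ c) (hc1 : c < 1) :
    cosineLaw c (1 - m * ε) (1 - (n + m + 1) * ε) * cosineLaw c (1 - (m - 1) * ε) (1 - (n + m) * ε)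
      < cosineLaw c 1 (1 - (n + 1) * ε) * cosineLaw c (1 + ε) (1 - n * ε) := by
  have hfactor : cosineLaw c 1 (1 - (n + 1) * ε) * cosineLaw c (1 + ε) (1 - n * ε)
      - cosineLaw c (1 - m * ε) (1 - (n + m + 1) * ε)
        * cosineLaw c (1 - (m - 1) * ε) (1 - (n + m) * ε)
      = 2 * m * ε * (2 - (n + m) * ε) * (1 - c) * ((1 + c) * (n + 1) ^ 2 * ε ^ 2
        + (1 - c) * ((2 - (n + m) * ε) ^ 2 + (m ^ 2 - 1) * ε ^ 2)) := by
    unfold cosineLaw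
    ring
  have hm0 : 0 < m := by linarith
  have hm2 : 0 ≤ m ^ 2 - 1 := by nlinarith
  have hgap : 0 < 2 - (n + m) * ε := by linarith
  have hc0 : 0 ≤ 1 + c := by linarith
  have hc10 : 0 < 1 - c := by linarith
  rw [← sub_pos, hfactor]
  positivity

theorem mul_one_sub_lt_two {s b : ℝ} (hs : 3 ≤ s) (hb : (s - 2) / (s - 1) < b) :
    s * (1 - b) < 2 := by
  rw [div_lt_iff₀ (by linarith)] at hb
  nlinarith

theorem add_ne_zero_of_norm_lt {E : Type*} [SeminormedAddGroup E] {a w : E} (h : ‖w‖ < ‖a‖) :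
    a + w ≠ 0 := fun h0 => by
  rw [eq_neg_of_add_eq_zero_right h0, norm_neg] at h
  exact lt_irrefl _ h

theorem norm_div_mul_norm_div_lt_one {𝕜 : Type*} [NormedField 𝕜] {x y u v : 𝕜}
    (h : ‖x‖ ^ 2 * ‖y‖ ^ 2 < ‖u‖ ^ 2 * ‖v‖ ^ 2) : ‖x / u‖ * ‖y / v‖ < 1 := by
  rw [← norm_mul, div_mul_div_comm, norm_div]
  have hlt : ‖x * y‖ < ‖u * v‖ := by
    refine lt_of_pow_lt_pow_left₀ 2 (norm_nonneg _) ?_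
    rwa [norm_mul, norm_mul, mul_pow, mul_pow]
  exact (div_lt_one ((norm_nonneg _).trans_lt hlt)).2 hlt

section Field

variable {K : Type*} [Field K] {n : K} (ε k w : K)

theorem moebius_circlePoint (hn : n ≠ 0) (hn1 : n + 1 ≠ 0) :
    ((n + 1) * (1 / (n + 1) + n / (n + 1) * w) - 1) / (1 / (n + 1) + n / (n + 1) * w + n - 1)
      = (n + 1) * w / (n + w) := by
  have hnum : (n + 1) * (1 / (n + 1) + n / (n + 1) * w) - 1 = n / (n + 1) * ((n + 1) * w) := by
    field_simp
    ring
  have hden : 1 / (n + 1) + n / (n + 1) * w + n - 1 = n / (n + 1) * (n + w) := by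
    field_simp
    ring
  rw [hnum, hden, mul_div_mul_left _ _ (div_ne_zero hn hn1)]

theorem ratio_circlePoint (hn : n ≠ 0) (hn1 : n + 1 ≠ 0) :
    ((1 - k * ε) * (1 / (n + 1) + n / (n + 1) * w) - (1 - (n + k) * ε))
        / (1 / (n + 1) + n / (n + 1) * w - (1 - n * ε))
      = ((1 - k * ε) * w - (1 - (n + k + 1) * ε)) / (w - (1 - (n + 1) * ε)) := by
  have hnum : (1 - k * ε) * (1 / (n + 1) + n / (n + 1) * w) - (1 - (n + k) * ε)
      = n / (n + 1) * ((1 - k * ε) * w - (1 - (n + k + 1) * ε)) := by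
    field_simp
    ring
  have hden : 1 / (n + 1) + n / (n + 1) * w - (1 - n * ε)
      = n / (n + 1) * (w - (1 - (n + 1) * ε)) := by
    field_simp
    ring
  rw [hnum, hden, mul_div_mul_left _ _ (div_ne_zero hn hn1)]

theorem ratio_moebius (hn : n ≠ 0) (hnw : n + w ≠ 0) :
    ((1 - k * ε) * ((n + 1) * w / (n + w)) - (1 - (n + k) * ε))
        / ((n + 1) * w / (n + w) - (1 - n * ε))
      = ((1 - (k - 1) * ε) * w - (1 - (n + k) * ε)) / ((1 + ε) * w - (1 - n * ε)) := by
  have hnum : (1 - k * ε) * ((n + 1) * w / (n + w)) - (1 - (n + k) * ε)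
      = n / (n + w) * ((1 - (k - 1) * ε) * w - (1 - (n + k) * ε)) := by
    field_simp
    ring
  have hden : (n + 1) * w / (n + w) - (1 - n * ε) = n / (n + w) * ((1 + ε) * w - (1 - n * ε)) := by
    field_simp
    ring
  rw [hnum, hden, mul_div_mul_left _ _ (div_ne_zero hn hnw)]

end Field

theorem norm_circlePoint_mul_norm_moebius {w : ℂ} (hw : ‖w‖ = 1) {n : ℝ}
    (hn1 : (n : ℂ) + 1 ≠ 0) (hnw : (n : ℂ) + w ≠ 0) :
    ‖1 / ((n : ℂ) + 1) + n / (n + 1) * w‖ * ‖((n : ℂ) + 1) * w / (n + w)‖ = 1 := by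
  have : (1 / ((n : ℂ) + 1) + n / (n + 1) * w) * ((n + 1) * w / (n + w))
      = w * ((1 + n * w) / (n + w)) := by
    field_simp
  rw [← norm_mul, this, norm_mul, norm_div, hw, norm_one_add_ofReal_mul hw, one_mul,
    div_self (norm_ne_zero_iff.2 hnw)]

theorem cos_lt_one_of_mem_Ioc {θ : ℝ} (hθ : θ ∈ Set.Ioc (-π) π) (hθ0 : θ ≠ 0) : cos θ < 1 :=
  (cos_le_one θ).lt_of_ne fun h => hθ0 <|
    (cos_eq_one_iff_of_lt_of_lt (by linarith [hθ.1, pi_pos]) (by linarith [hθ.2, pi_pos])).1 h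

/-- **Steepest descent condition (SD𝓜) for `𝔥_*`** (Lemma 6.3 of the paper).
Let `I ≥ 2`, `J ≥ 1`, `b ∈ ((I+J-2)/(I+J-1), 1)`,
`𝔭_*(z) = ((I+1)z-1)/(z+I-1)` and `𝔥_*(z) = 𝔇_*(z)𝔇_*(𝔭_*(z))` with
`𝔇_*(z) = z^{J/I}((bJ-(J-1))z - ((I+J)b-(I+J-1)))/(z-(Ib-(I-1)))`; the modulus of the
fractional power factor of `𝔥_*` equals `(|z||𝔭_*(z)|)^{J/I}`.  Then for
`z(θ) = 1/(I+1) + (I/(I+1))e^{iθ}` with `θ ∈ (-π,π] \ {0}` one has `|𝔥_*(z(θ))| < 1`. -/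
theorem hstar_circleM_bound (I J : ℕ) (hI : 2 ≤ I) (hJ : 1 ≤ J) (b : ℝ)
    (hb : b ∈ Set.Ioo (((I : ℝ) + J - 2) / ((I : ℝ) + J - 1)) 1)
    (θ : ℝ) (hθ : θ ∈ Set.Ioc (-π) π) (hθ0 : θ ≠ 0) :
    let R : ℂ → ℂ := fun w =>
      (((b * J - ((J : ℝ) - 1) : ℝ) : ℂ) * w
          - ((((I : ℝ) + J) * b - ((I : ℝ) + J - 1) : ℝ) : ℂ)) /
        (w - (((I : ℝ) * b - ((I : ℝ) - 1) : ℝ) : ℂ))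
    let z : ℂ := 1 / ((I : ℂ) + 1) + ((I : ℂ) / ((I : ℂ) + 1)) * Complex.exp (θ * Complex.I)
    let p : ℂ := (((I : ℂ) + 1) * z - 1) / (z + (I : ℂ) - 1)
    (‖z‖ * ‖p‖) ^ ((J : ℝ) / I) *
        (‖R z‖ * ‖R p‖) < 1 := by
  intro R z p
  obtain ⟨hb1, hb2⟩ := hb
  set w := Complex.exp (θ * Complex.I)
  have hw : ‖w‖ = 1 := Complex.norm_exp_ofReal_mul_I θ
  have hm : (1 : ℝ) ≤ J := by exact_mod_cast hJ
  have hn0 : (I : ℂ) ≠ 0 := by exact_mod_cast (by omega : I ≠ 0)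
  have hn1 : (I : ℂ) + 1 ≠ 0 := by exact_mod_cast (by omega : I + 1 ≠ 0)
  have hnw : (I : ℂ) + w ≠ 0 := add_ne_zero_of_norm_lt <| by
    rw [hw, Complex.norm_natCast]
    exact_mod_cast (by omega : 1 < I)
  have hε : 0 < 1 - b := by linarith
  have hz : z = 1 / ((I : ℂ) + 1) + I / (I + 1) * w := rfl
  have hp : p = ((I : ℂ) + 1) * w / (I + w) := moebius_circlePoint w hn0 hn1
  have hR : ∀ v, R v = ((1 - J * (1 - b)) * v - (1 - (I + J) * (1 - b))) / (v - (1 - I * (1 - b))) := by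
    intro v
    simp only [R]
    push_cast
    ring
  have hzp := norm_circlePoint_mul_norm_moebius hw (n := I) (by exact_mod_cast hn1)
    (by exact_mod_cast hnw)
  push_cast at hzp
  rw [hp, hz, hzp, one_rpow, one_mul, hR, hR, ratio_circlePoint _ _ _ hn0 hn1,
    ratio_moebius _ _ _ hn0 hnw]
  apply norm_div_mul_norm_div_lt_one
  have key := cosineLaw_mul_lt_cosineLaw_mul hm hε (mul_one_sub_lt_two (by exact_mod_cast (by omega : 3 ≤ I + J)) hb1)
    (neg_one_le_cos θ) (cos_lt_one_of_mem_Ioc hθ hθ0)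
  rw [← show w.re = cos θ from Complex.exp_ofReal_mul_I_re θ] at key
  simp only [← norm_ofReal_mul_sub_ofReal_sq hw] at key
  push_cast [one_mul] at key
  exact key
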